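/- arXiv:2101.04665 — 2 statements merged into one kernel-verified Lean document; each statement's English description precedes it below -/
import Mathlib

section
/- Let (X, μ) be a finite measure space, δ a positive integer, and M > 0. Let (u_n) be a sequence of measurable real-valued functions and u a measurable real-valued function such that: (i) ∫ |u_n − u|² dμ → 0 as n → ∞; (ii) ‖u_n‖_{L^{2(δ+1)}(μ)} ≤ M for all n; (iii) u ∈ L^{2(δ+1)}(μ). Then for every measurable essentially bounded g : X → ℝ, ∫ u_n^{2δ+1}·g dμ → ∫ u^{2δ+1}·g dμ as n → ∞. -/
/-! Write `S = |uₙ| + |u|` and `H = |uₙ - u| ≤ S`. Factoring `a ^ k - b ^ k` gives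
`|uₙ ^ (2δ+1) - u ^ (2δ+1)| ≤ (2δ+1) S ^ (2δ) H`, and since `H ≤ S` this is at most
`(2δ+1) (S ^ (2δ+2)) ^ (1 - 1/(2δ)) (H ^ 2) ^ (1/(2δ))`. Hölder's inequality with exponents
`2δ/(2δ-1)` and `2δ` then bounds `‖uₙ ^ (2δ+1) - u ^ (2δ+1)‖_{L¹}` by a constant, coming from the
uniform `L^{2(δ+1)}` bounds, times `(∫ |uₙ - u|²)^(1/(2δ)) → 0`. Convergence in `L¹` survives
multiplication by `g ∈ L^∞`. -/

open MeasureTheory Filter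

/-- The L^p(μ) norm ‖f‖_{L^p(μ)} = (∫ |f|^p dμ)^{1/p}. -/
noncomputable def lpNormR {X : Type*} [MeasurableSpace X] (μ : Measure X) (p : ℕ)
    (f : X → ℝ) : ℝ :=
  (∫ x, |f x| ^ p ∂μ) ^ ((1 : ℝ) / p)

open scoped ENNReal Topology

theorem enorm_pow_sub_pow_le (a b : ℝ) (k : ℕ) :
    ‖a ^ k - b ^ k‖ₑ ≤ k * (‖a‖ₑ + ‖b‖ₑ) ^ (k - 1) * ‖a - b‖ₑ := by
  have h : |a ^ k - b ^ k| ≤ k * (|a| + |b|) ^ (k - 1) * |a - b| :=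
    calc |a ^ k - b ^ k| ≤ |a - b| * k * max |a| |b| ^ (k - 1) := abs_pow_sub_pow_le ..
      _ ≤ |a - b| * k * (|a| + |b|) ^ (k - 1) := by
        gcongr; exact max_le_add_of_nonneg (abs_nonneg a) (abs_nonneg b)
      _ = k * (|a| + |b|) ^ (k - 1) * |a - b| := by ring
  simp only [Real.enorm_eq_ofReal_abs]
  rw [← ENNReal.ofReal_add (abs_nonneg a) (abs_nonneg b), ← ENNReal.ofReal_pow (by positivity),
    ← ENNReal.ofReal_natCast, ← ENNReal.ofReal_mul (by positivity),
    ← ENNReal.ofReal_mul (by positivity)]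
  exact ENNReal.ofReal_le_ofReal h

theorem ENNReal.pow_mul_le_rpow_mul_rpow_of_le {s h : ℝ≥0∞} (hhs : h ≤ s) (n : ℕ) {θ : ℝ}
    (hθ₀ : 0 ≤ θ) (hθ₁ : θ ≤ 1) : s ^ n * h ≤ s ^ (n + 1 - θ) * h ^ θ := by
  calc s ^ n * h = s ^ (n : ℝ) * h ^ (1 - θ) * h ^ θ := by
        rw [ENNReal.rpow_natCast, mul_assoc, ← ENNReal.rpow_add_of_nonneg _ _ (by linarith) hθ₀,
          sub_add_cancel, ENNReal.rpow_one]
    _ ≤ s ^ (n : ℝ) * s ^ (1 - θ) * h ^ θ := by gcongr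
    _ = s ^ (n + 1 - θ) * h ^ θ := by
        rw [← ENNReal.rpow_add_of_nonneg _ _ (Nat.cast_nonneg n) (by linarith), add_sub_assoc]

section

variable {X : Type*} [MeasurableSpace X] {μ : Measure X}

theorem lintegral_pow_mul_le_of_le {s h : X → ℝ≥0∞} (hs : AEMeasurable s μ)
    (hh : AEMeasurable h μ) (hhs : ∀ x, h x ≤ s x) {n : ℕ} (hn : 2 ≤ n) :
    ∫⁻ x, s x ^ n * h x ∂μ ≤
      (∫⁻ x, s x ^ (n + 2) ∂μ) ^ (1 - 1 / (n : ℝ)) * (∫⁻ x, h x ^ 2 ∂μ) ^ (1 / (n : ℝ)) := by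
  have hn' : (2 : ℝ) ≤ n := by exact_mod_cast hn
  have hθ : 1 / (n : ℝ) ≤ 1 := by rw [div_le_one] <;> linarith
  have hpt (x : X) :
      s x ^ n * h x ≤ (s x ^ (n + 2)) ^ (1 - 1 / (n : ℝ)) * (h x ^ 2) ^ (1 / (n : ℝ)) := by
    refine (ENNReal.pow_mul_le_rpow_mul_rpow_of_le (hhs x) n (θ := 2 / n) (by positivity)
      (by rw [div_le_one] <;> linarith)).trans_eq ?_
    rw [← ENNReal.rpow_natCast, ← ENNReal.rpow_natCast (h x), ← ENNReal.rpow_mul,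
      ← ENNReal.rpow_mul]
    congr 2
    · push_cast; field_simp; ring
    · ring
  exact (lintegral_mono hpt).trans <| ENNReal.lintegral_mul_norm_pow_le (hs.pow_const _)
    (hh.pow_const _) (by linarith) (by positivity) (by ring)

theorem lintegral_enorm_pow_sub_pow_le {f g : X → ℝ} (hf : AEMeasurable f μ)
    (hg : AEMeasurable g μ) {n : ℕ} (hn : 2 ≤ n) :
    ∫⁻ x, ‖f x ^ (n + 1) - g x ^ (n + 1)‖ₑ ∂μ ≤
      (n + 1) * (∫⁻ x, (‖f x‖ₑ + ‖g x‖ₑ) ^ (n + 2) ∂μ) ^ (1 - 1 / (n : ℝ)) *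
        (∫⁻ x, ‖f x - g x‖ₑ ^ 2 ∂μ) ^ (1 / (n : ℝ)) := by
  calc ∫⁻ x, ‖f x ^ (n + 1) - g x ^ (n + 1)‖ₑ ∂μ
      ≤ ∫⁻ x, (n + 1) * ((‖f x‖ₑ + ‖g x‖ₑ) ^ n * ‖f x - g x‖ₑ) ∂μ :=
        lintegral_mono fun x => by
          simpa [mul_assoc] using enorm_pow_sub_pow_le (f x) (g x) (n + 1)
    _ = (n + 1) * ∫⁻ x, (‖f x‖ₑ + ‖g x‖ₑ) ^ n * ‖f x - g x‖ₑ ∂μ :=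
        lintegral_const_mul' _ _ (by simp)
    _ ≤ _ := by
        rw [mul_assoc]
        gcongr
        exact lintegral_pow_mul_le_of_le (hf.enorm.add hg.enorm) (hf.sub hg).enorm
          (fun x => enorm_sub_le) hn

theorem lintegral_add_pow_le {f g : X → ℝ≥0∞} (hf : AEMeasurable f μ) {p : ℕ} (hp : 1 ≤ p) :
    ∫⁻ x, (f x + g x) ^ p ∂μ ≤ 2 ^ (p - 1) * (∫⁻ x, f x ^ p ∂μ + ∫⁻ x, g x ^ p ∂μ) := by
  have hpt (x : X) : (f x + g x) ^ p ≤ 2 ^ (p - 1) * (f x ^ p + g x ^ p) := by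
    simpa [← ENNReal.rpow_natCast, Nat.cast_sub hp] using
      ENNReal.rpow_add_le_mul_rpow_add_rpow (f x) (g x) (p := p) (by exact_mod_cast hp)
  calc ∫⁻ x, (f x + g x) ^ p ∂μ ≤ ∫⁻ x, 2 ^ (p - 1) * (f x ^ p + g x ^ p) ∂μ :=
        lintegral_mono hpt
    _ = _ := by rw [lintegral_const_mul' _ _ (by simp), lintegral_add_left' (hf.pow_const p)]

theorem tendsto_lintegral_enorm_pow_sub_pow {ι : Type*} {l : Filter ι} {f : ι → X → ℝ}
    {g : X → ℝ} (hf : ∀ i, AEMeasurable (f i) μ) (hg : AEMeasurable g μ) {n : ℕ} (hn : 2 ≤ n)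
    {B : ℝ≥0∞} (hB : B ≠ ∞) (hbound : ∀ i, ∫⁻ x, (‖f i x‖ₑ + ‖g x‖ₑ) ^ (n + 2) ∂μ ≤ B)
    (hL2 : Tendsto (fun i => ∫⁻ x, ‖f i x - g x‖ₑ ^ 2 ∂μ) l (𝓝 0)) :
    Tendsto (fun i => ∫⁻ x, ‖f i x ^ (n + 1) - g x ^ (n + 1)‖ₑ ∂μ) l (𝓝 0) := by
  have hn' : (2 : ℝ) ≤ n := by exact_mod_cast hn
  have hθ₀ : 0 < 1 / (n : ℝ) := by positivity
  have hθ₁ : 1 / (n : ℝ) ≤ 1 := by rw [div_le_one] <;> linarith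
  have hlim : Tendsto (fun i => (n + 1) * B ^ (1 - 1 / (n : ℝ)) *
      (∫⁻ x, ‖f i x - g x‖ₑ ^ 2 ∂μ) ^ (1 / (n : ℝ))) l (𝓝 0) := by
    have := ENNReal.Tendsto.const_mul
      (((ENNReal.continuous_rpow_const (y := 1 / (n : ℝ))).tendsto 0).comp hL2)
      (a := (n + 1 : ℝ≥0∞) * B ^ (1 - 1 / (n : ℝ)))
      (Or.inr (ENNReal.mul_ne_top (by simp) (ENNReal.rpow_ne_top_of_nonneg (by linarith) hB)))
    rwa [ENNReal.zero_rpow_of_pos hθ₀, mul_zero] at this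
  refine tendsto_of_tendsto_of_tendsto_of_le_of_le tendsto_const_nhds hlim (fun _ => zero_le)
    fun i => (lintegral_enorm_pow_sub_pow_le (hf i) hg hn).trans ?_
  gcongr
  exact hbound i

theorem lintegral_enorm_pow_eq_ofReal_integral {f : X → ℝ} {p : ℕ}
    (hf : Integrable (fun x => |f x| ^ p) μ) :
    ∫⁻ x, ‖f x‖ₑ ^ p ∂μ = ENNReal.ofReal (∫ x, |f x| ^ p ∂μ) := by
  rw [ofReal_integral_eq_lintegral_ofReal hf (ae_of_all _ fun x => by positivity)]
  simp_rw [Real.enorm_eq_ofReal_abs, ENNReal.ofReal_pow (abs_nonneg _)]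

theorem memLp_of_integrable_abs_pow {f : X → ℝ} (hf : AEStronglyMeasurable f μ) {p : ℕ}
    (hp : p ≠ 0) (hint : Integrable (fun x => |f x| ^ p) μ) : MemLp f p μ := by
  rw [← integrable_norm_rpow_iff hf (by simpa) (by simp)]
  simpa [Real.norm_eq_abs] using hint

theorem MeasureTheory.MemLp.integrable_pow [IsFiniteMeasure μ] {f : X → ℝ} {p k : ℕ}
    (hf : MemLp f p μ) (hk : k ≤ p) : Integrable (fun x => f x ^ k) μ := by
  have := (hf.mono_exponent (by exact_mod_cast hk : (k : ℝ≥0∞) ≤ p)).integrable_norm_pow'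
  exact (integrable_norm_iff (hf.aestronglyMeasurable.pow k)).1 (by simpa [norm_pow] using this)

theorem integral_abs_pow_le_of_lpNormR_le {f : X → ℝ} {p : ℕ} (hp : p ≠ 0) {M : ℝ}
    (h : lpNormR μ p f ≤ M) : ∫ x, |f x| ^ p ∂μ ≤ M ^ p := by
  have hI : 0 ≤ ∫ x, |f x| ^ p ∂μ := integral_nonneg fun x => by positivity
  calc ∫ x, |f x| ^ p ∂μ = lpNormR μ p f ^ p := by
        rw [lpNormR, ← Real.rpow_natCast, ← Real.rpow_mul hI, one_div_mul_cancel (by simpa),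
          Real.rpow_one]
    _ ≤ M ^ p := pow_le_pow_left₀ (Real.rpow_nonneg hI _) h p

theorem tendsto_integral_mul_of_tendsto_lintegral_enorm {ι : Type*} {l : Filter ι}
    {F : ι → X → ℝ} {G g : X → ℝ} (hF : ∀ i, Integrable (F i) μ) (hG : Integrable G μ)
    (hg : MemLp g ∞ μ) (hlim : Tendsto (fun i => ∫⁻ x, ‖F i x - G x‖ₑ ∂μ) l (𝓝 0)) :
    Tendsto (fun i => ∫ x, F i x * g x ∂μ) l (𝓝 (∫ x, G x * g x ∂μ)) := by
  refine tendsto_integral_of_L1 _ (hG.mul_of_top_left hg).aestronglyMeasurable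
    (Eventually.of_forall fun i => (hF i).mul_of_top_left hg) ?_
  have hbound (i : ι) : ∫⁻ x, ‖F i x * g x - G x * g x‖ₑ ∂μ ≤
      (∫⁻ x, ‖F i x - G x‖ₑ ∂μ) * eLpNorm g ∞ μ :=
    calc ∫⁻ x, ‖F i x * g x - G x * g x‖ₑ ∂μ = ∫⁻ x, ‖F i x - G x‖ₑ * ‖g x‖ₑ ∂μ := by
          simp_rw [← sub_mul, enorm_mul]
      _ ≤ ∫⁻ x, ‖F i x - G x‖ₑ * eLpNorm g ∞ μ ∂μ := by
          refine lintegral_mono_ae ?_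
          filter_upwards [ae_le_eLpNormEssSup (f := g) (μ := μ)] with x hx
          rw [eLpNorm_exponent_top]
          gcongr
      _ = _ := lintegral_mul_const' _ _ hg.eLpNorm_ne_top
  have := ENNReal.Tendsto.mul_const hlim (Or.inr hg.eLpNorm_ne_top)
  rw [zero_mul] at this
  exact tendsto_of_tendsto_of_tendsto_of_le_of_le tendsto_const_nhds this (fun _ => zero_le) hbound

end

theorem stmt_16_general {X : Type*} [MeasurableSpace X] (μ : Measure X) [IsFiniteMeasure μ]
    (δ : ℕ) (hδ : 0 < δ) (M : ℝ)
    (un : ℕ → X → ℝ) (u : X → ℝ)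
    (hun : ∀ n, Measurable (un n)) (hu : Measurable u)
    (hconv : Tendsto (fun n => ∫ x, |un n x - u x| ^ 2 ∂μ) atTop (nhds 0))
    (hunp : ∀ n, Integrable (fun x => |un n x| ^ (2 * (δ + 1))) μ)
    (hbdd : ∀ n, lpNormR μ (2 * (δ + 1)) (un n) ≤ M)
    (hup : Integrable (fun x => |u x| ^ (2 * (δ + 1))) μ) :
    ∀ g : X → ℝ, Measurable g → eLpNorm g ⊤ μ < ⊤ →
      Tendsto (fun n => ∫ x, un n x ^ (2 * δ + 1) * g x ∂μ) atTop
        (nhds (∫ x, u x ^ (2 * δ + 1) * g x ∂μ)) := by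
  intro g hg hg_top
  have hm : 2 * (δ + 1) ≠ 0 := by omega
  have hmem (n : ℕ) : MemLp (un n) (2 * (δ + 1) : ℕ) μ :=
    memLp_of_integrable_abs_pow (hun n).aestronglyMeasurable hm (hunp n)
  have hmem_u : MemLp u (2 * (δ + 1) : ℕ) μ :=
    memLp_of_integrable_abs_pow hu.aestronglyMeasurable hm hup
  have hL2 : Tendsto (fun n => ∫⁻ x, ‖un n x - u x‖ₑ ^ 2 ∂μ) atTop (𝓝 0) := by
    have hint (n : ℕ) : Integrable (fun x => |un n x - u x| ^ 2) μ := by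
      simpa using (((hmem n).sub hmem_u).mono_exponent (by norm_cast; omega)).integrable_norm_pow
        two_ne_zero
    simp_rw [lintegral_enorm_pow_eq_ofReal_integral (hint _)]
    simpa using ENNReal.tendsto_ofReal hconv
  have hbound (n : ℕ) : ∫⁻ x, (‖un n x‖ₑ + ‖u x‖ₑ) ^ (2 * δ + 2) ∂μ ≤
      2 ^ (2 * (δ + 1) - 1) * (ENNReal.ofReal (M ^ (2 * (δ + 1))) +
        ENNReal.ofReal (∫ x, |u x| ^ (2 * (δ + 1)) ∂μ)) := by
    refine (lintegral_add_pow_le (hun n).enorm.aemeasurable (by omega)).trans ?_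
    rw [show 2 * δ + 2 = 2 * (δ + 1) by ring, lintegral_enorm_pow_eq_ofReal_integral (hunp n),
      lintegral_enorm_pow_eq_ofReal_integral hup]
    gcongr
    exact integral_abs_pow_le_of_lpNormR_le hm (hbdd n)
  refine tendsto_integral_mul_of_tendsto_lintegral_enorm
    (fun n => (hmem n).integrable_pow (by omega)) (hmem_u.integrable_pow (by omega))
    ⟨hg.aestronglyMeasurable, hg_top⟩ ?_
  exact tendsto_lintegral_enorm_pow_sub_pow (n := 2 * δ) (fun n => (hun n).aemeasurable)
    hu.aemeasurable (by omega) (by finiteness) hbound hL2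

/-- Convergence of the highest-order reaction term (paper's estimate (216)): on a finite
measure space, if ∫|u_n − u|² dμ → 0, the u_n ∈ L^{2(δ+1)}(μ) are uniformly bounded
by M in the L^{2(δ+1)} norm, and u ∈ L^{2(δ+1)}(μ), then for every measurable
essentially bounded g, ∫ u_n^{2δ+1}·g dμ → ∫ u^{2δ+1}·g dμ. -/
theorem stmt_16 {X : Type*} [MeasurableSpace X] (μ : Measure X) [IsFiniteMeasure μ]
    (δ : ℕ) (hδ : 0 < δ) (M : ℝ) (hM : 0 < M)
    (un : ℕ → X → ℝ) (u : X → ℝ)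
    (hun : ∀ n, Measurable (un n)) (hu : Measurable u)
    (hconv : Tendsto (fun n => ∫ x, |un n x - u x| ^ 2 ∂μ) atTop (nhds 0))
    (hunp : ∀ n, Integrable (fun x => |un n x| ^ (2 * (δ + 1))) μ)
    (hbdd : ∀ n, lpNormR μ (2 * (δ + 1)) (un n) ≤ M)
    (hup : Integrable (fun x => |u x| ^ (2 * (δ + 1))) μ) :
    ∀ g : X → ℝ, Measurable g → eLpNorm g ⊤ μ < ⊤ →
      Tendsto (fun n => ∫ x, un n x ^ (2 * δ + 1) * g x ∂μ) atTop
        (nhds (∫ x, u x ^ (2 * δ + 1) * g x ∂μ)) :=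
  stmt_16_general μ δ hδ M un u hun hu hconv hunp hbdd hup
end

section
/- Let (X, μ) be a measure space, δ a positive integer, and let u, v, h : X → ℝ be measurable functions such that |u|^δ·(u−v) ∈ L²(μ), |v|^δ·(u−v) ∈ L²(μ), and h ∈ L²(μ). Then (u^{δ+1} − v^{δ+1})·h is integrable and | ∫ (u^{δ+1} − v^{δ+1})·h dμ | ≤ 2^{δ−1}(δ+1)·( ‖|u|^δ(u−v)‖_{L²(μ)} + ‖|v|^δ(u−v)‖_{L²(μ)} )·‖h‖_{L²(μ)}. -/
/-!
Pointwise, `|u^(δ+1) - v^(δ+1)| ≤ (δ+1) max(|u|,|v|)^δ |u - v| ≤ (δ+1) (|u|^δ + |v|^δ) |u - v|`,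
so the integrand is dominated by `(δ+1)(|f₁ h| + |f₂ h|)` with `f₁ = |u|^δ (u-v)` and
`f₂ = |v|^δ (u-v)`. Cauchy–Schwarz bounds each `∫ |fᵢ h|` by `‖fᵢ‖ ‖h‖`, and `1 ≤ 2^(δ-1)`.
-/

open MeasureTheory

/-- The L²(μ) norm ‖f‖_{L²(μ)} = (∫ |f|² dμ)^{1/2}. -/
noncomputable def l2NormR {X : Type*} [MeasurableSpace X] (μ : Measure X)
    (f : X → ℝ) : ℝ :=
  (∫ x, |f x| ^ 2 ∂μ) ^ ((1 : ℝ) / 2)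

lemma abs_pow_succ_sub_pow_succ_le {α : Type*} [CommRing α] [LinearOrder α] [IsOrderedRing α]
    (a b : α) (n : ℕ) :
    |a ^ (n + 1) - b ^ (n + 1)| ≤ (n + 1) * ((|a| ^ n + |b| ^ n) * |a - b|) := by
  have hmax : max |a| |b| ^ n ≤ |a| ^ n + |b| ^ n := by
    rcases max_choice |a| |b| with h | h <;> rw [h]
    exacts [le_add_of_nonneg_right (by positivity), le_add_of_nonneg_left (by positivity)]
  calc |a ^ (n + 1) - b ^ (n + 1)| ≤ |a - b| * (n + 1 : ℕ) * max |a| |b| ^ n :=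
        abs_pow_sub_pow_le a b (n + 1)
    _ ≤ |a - b| * (n + 1 : ℕ) * (|a| ^ n + |b| ^ n) := by gcongr
    _ = (n + 1) * ((|a| ^ n + |b| ^ n) * |a - b|) := by push_cast; ring

section
variable {X : Type*} [MeasurableSpace X] {μ : Measure X}

lemma l2NormR_nonneg (f : X → ℝ) : 0 ≤ l2NormR μ f :=
  Real.rpow_nonneg (integral_nonneg fun _ => by positivity) _

lemma integral_abs_mul_le_l2NormR_mul {f g : X → ℝ} (hf : MemLp f 2 μ) (hg : MemLp g 2 μ) :
    ∫ x, |f x * g x| ∂μ ≤ l2NormR μ f * l2NormR μ g := by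
  have hHolder := integral_mul_norm_le_Lp_mul_Lq (f := f) (g := g) Real.HolderConjugate.two_two
    (by rwa [ENNReal.ofReal_ofNat]) (by rwa [ENNReal.ofReal_ofNat])
  simpa only [Real.norm_eq_abs, abs_mul, Real.rpow_two, l2NormR] using hHolder

lemma integrable_and_abs_integral_le_of_abs_le {F f₁ f₂ g : X → ℝ} {C : ℝ}
    (hF : AEStronglyMeasurable F μ) (hf₁ : MemLp f₁ 2 μ) (hf₂ : MemLp f₂ 2 μ) (hg : MemLp g 2 μ)
    (hC : 0 ≤ C) (hFle : ∀ x, |F x| ≤ C * (|f₁ x * g x| + |f₂ x * g x|)) :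
    Integrable F μ ∧
      |∫ x, F x ∂μ| ≤ C * (l2NormR μ f₁ + l2NormR μ f₂) * l2NormR μ g := by
  have hint₁ : Integrable (fun x => |f₁ x * g x|) μ := (hf₁.integrable_mul hg).abs
  have hint₂ : Integrable (fun x => |f₂ x * g x|) μ := (hf₂.integrable_mul hg).abs
  have hmaj : Integrable (fun x => C * (|f₁ x * g x| + |f₂ x * g x|)) μ :=
    (hint₁.add hint₂).const_mul C
  have hintF : Integrable F μ := hmaj.mono' hF (Filter.Eventually.of_forall hFle)
  refine ⟨hintF, ?_⟩
  calc |∫ x, F x ∂μ| ≤ ∫ x, |F x| ∂μ := abs_integral_le_integral_abs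
    _ ≤ ∫ x, C * (|f₁ x * g x| + |f₂ x * g x|) ∂μ := integral_mono hintF.abs hmaj hFle
    _ = C * ((∫ x, |f₁ x * g x| ∂μ) + ∫ x, |f₂ x * g x| ∂μ) := by
        rw [integral_const_mul, integral_add hint₁ hint₂]
    _ ≤ C * (l2NormR μ f₁ * l2NormR μ g + l2NormR μ f₂ * l2NormR μ g) := by
        gcongr
        exacts [integral_abs_mul_le_l2NormR_mul hf₁ hg, integral_abs_mul_le_l2NormR_mul hf₂ hg]
    _ = C * (l2NormR μ f₁ + l2NormR μ f₂) * l2NormR μ g := by ring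

end

theorem stmt_17_general {X : Type*} [MeasurableSpace X] (μ : Measure X)
    (δ : ℕ) (u v h : X → ℝ)
    (hu : Measurable u) (hv : Measurable v) (hh : Measurable h)
    (hu2 : Integrable (fun x => (|u x| ^ δ * (u x - v x)) ^ 2) μ)
    (hv2 : Integrable (fun x => (|v x| ^ δ * (u x - v x)) ^ 2) μ)
    (hh2 : Integrable (fun x => |h x| ^ 2) μ) :
    Integrable (fun x => (u x ^ (δ + 1) - v x ^ (δ + 1)) * h x) μ ∧
      |∫ x, (u x ^ (δ + 1) - v x ^ (δ + 1)) * h x ∂μ| ≤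
        2 ^ (δ - 1) * ((δ : ℝ) + 1) *
          (l2NormR μ (fun x => |u x| ^ δ * (u x - v x)) +
            l2NormR μ (fun x => |v x| ^ δ * (u x - v x))) *
          l2NormR μ h := by
  have hu_L2 := (memLp_two_iff_integrable_sq
    ((hu.abs.pow_const δ).mul (hu.sub hv)).aestronglyMeasurable).2 hu2
  have hv_L2 := (memLp_two_iff_integrable_sq
    ((hv.abs.pow_const δ).mul (hu.sub hv)).aestronglyMeasurable).2 hv2
  have hh_L2 := (memLp_two_iff_integrable_sq hh.aestronglyMeasurable).2
    (by simpa only [sq_abs] using hh2)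
  have hpointwise (x : X) : |(u x ^ (δ + 1) - v x ^ (δ + 1)) * h x| ≤
      ((δ : ℝ) + 1) * (|(|u x| ^ δ * (u x - v x)) * h x| + |(|v x| ^ δ * (u x - v x)) * h x|) := by
    simp only [abs_mul, abs_pow, abs_abs]
    exact (mul_le_mul_of_nonneg_right (abs_pow_succ_sub_pow_succ_le (u x) (v x) δ)
      (abs_nonneg (h x))).trans_eq (by ring)
  obtain ⟨hint, hle⟩ := integrable_and_abs_integral_le_of_abs_le
    (((hu.pow_const _).sub (hv.pow_const _)).mul hh).aestronglyMeasurable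
    hu_L2 hv_L2 hh_L2 (by positivity) hpointwise
  refine ⟨hint, hle.trans ?_⟩
  have hsum_nonneg := add_nonneg (l2NormR_nonneg (μ := μ) fun x => |u x| ^ δ * (u x - v x))
    (l2NormR_nonneg (μ := μ) fun x => |v x| ^ δ * (u x - v x))
  gcongr ?_ * _ * _
  · exact l2NormR_nonneg h
  · exact le_mul_of_one_le_left (by positivity) (one_le_pow₀ one_le_two)

/-- Cauchy–Schwarz estimate for the advection-difference term (paper's estimate (6.49)):
if |u|^δ(u−v), |v|^δ(u−v), h ∈ L²(μ), then (u^{δ+1} − v^{δ+1})·h is integrable and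
| ∫ (u^{δ+1} − v^{δ+1})·h dμ | ≤
  2^{δ−1}(δ+1)·( ‖|u|^δ(u−v)‖_{L²} + ‖|v|^δ(u−v)‖_{L²} )·‖h‖_{L²}. -/
theorem stmt_17 {X : Type*} [MeasurableSpace X] (μ : Measure X)
    (δ : ℕ) (hδ : 0 < δ) (u v h : X → ℝ)
    (hu : Measurable u) (hv : Measurable v) (hh : Measurable h)
    (hu2 : Integrable (fun x => (|u x| ^ δ * (u x - v x)) ^ 2) μ)
    (hv2 : Integrable (fun x => (|v x| ^ δ * (u x - v x)) ^ 2) μ)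
    (hh2 : Integrable (fun x => |h x| ^ 2) μ) :
    Integrable (fun x => (u x ^ (δ + 1) - v x ^ (δ + 1)) * h x) μ ∧
      |∫ x, (u x ^ (δ + 1) - v x ^ (δ + 1)) * h x ∂μ| ≤
        2 ^ (δ - 1) * ((δ : ℝ) + 1) *
          (l2NormR μ (fun x => |u x| ^ δ * (u x - v x)) +
            l2NormR μ (fun x => |v x| ^ δ * (u x - v x))) *
          l2NormR μ h :=
  stmt_17_general μ δ u v h hu hv hh hu2 hv2 hh2
end
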